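/- Extrapolation invariance (Lemma 2): Let g(T, M_f; N, M) = I_r·v·e^{-M_f/N} + I_r·r·(e^{-M_f/N}+1) + 2C_r·L + I_r·q·(L + s/B) + C_q·L + (I_w+I_r)·L·T/B + C_w·T·L, where L = ln(N·E/(M − M_f))/ln(T), for positive constants I_r, I_w, C_r, C_q, C_w, v, r, q, w, s, B, E. If a pair (T', M_f') with T' > 1 and 0 < M_f' < M' satisfies the stationarity conditions ∂g/∂T = 0 and ∂g/∂M_f = 0 at parameters (N', M'), then for any k > 0 the pair (T', k·M_f') satisfies the same stationarity conditions at parameters (k·N', k·M'). -/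

import Mathlib

open Real

/-- Extrapolation invariance (Lemma 2): if `(T', M_f')` is a stationary point of the
total per-operation leveling overhead `g` at parameters `(N', M')`, then `(T', k·M_f')`
is a stationary point at parameters `(k·N', k·M')` for any scaling factor `k > 0`. -/
theorem extrapolation_invariance
    (Ir Iw Cr Cq Cw v r q w s B E : ℝ)
    (hIr : 0 < Ir) (hIw : 0 < Iw) (hCr : 0 < Cr) (hCq : 0 < Cq) (hCw : 0 < Cw)
    (hv : 0 < v) (hr : 0 < r) (hq : 0 < q) (hw : 0 < w) (hs : 0 < s)
    (hB : 0 < B) (hE : 0 < E)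
    (g : ℝ → ℝ → ℝ → ℝ → ℝ)  -- arguments: T, M_f, N, M
    (hg : ∀ T Mf N M, g T Mf N M =
        Ir * v * Real.exp (-Mf / N) + Ir * r * (Real.exp (-Mf / N) + 1)
        + 2 * Cr * (Real.log (N * E / (M - Mf)) / Real.log T)
        + Ir * q * ((Real.log (N * E / (M - Mf)) / Real.log T) + s / B)
        + Cq * (Real.log (N * E / (M - Mf)) / Real.log T)
        + (Iw + Ir) * (Real.log (N * E / (M - Mf)) / Real.log T) * T / B
        + Cw * T * (Real.log (N * E / (M - Mf)) / Real.log T))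
    (T' Mf' N' M' k : ℝ)
    (hT' : 1 < T') (hN' : 0 < N') (hMf' : 0 < Mf') (hMf'M : Mf' < M') (hk : 0 < k)
    (hstatT : HasDerivAt (fun T => g T Mf' N' M') 0 T')
    (hstatM : HasDerivAt (fun Mf => g T' Mf N' M') 0 Mf') :
    HasDerivAt (fun T => g T (k * Mf') (k * N') (k * M')) 0 T' ∧
    HasDerivAt (fun Mf => g T' Mf (k * N') (k * M')) 0 (k * Mf') := by

  have hk0 : k ≠ 0 := ne_of_gt hk
  -- key rescaling identities
  have hexp : ∀ Mf : ℝ, -(k * Mf) / (k * N') = -Mf / N' := by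
    intro Mf
    rw [neg_div, neg_div, mul_div_mul_left Mf N' hk0]
  have hlog1 : ∀ Mf : ℝ, k * N' * E / (k * M' - k * Mf) = N' * E / (M' - Mf) := by
    intro Mf
    rw [show k * M' - k * Mf = k * (M' - Mf) by ring, mul_assoc,
      mul_div_mul_left _ _ hk0]
  have hlog2 : ∀ Mf : ℝ, k * N' * E / (k * M' - Mf) = N' * E / (M' - Mf / k) := by
    intro Mf
    rw [show M' - Mf / k = (k * M' - Mf) / k by field_simp, div_div_eq_mul_div]
    ring_nf
  constructor
  · have heq : (fun T => g T (k * Mf') (k * N') (k * M')) = fun T => g T Mf' N' M' := by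
      funext T
      rw [hg, hg, hexp, hlog1]
    rw [heq]
    exact hstatT
  · have heq : (fun Mf => g T' Mf (k * N') (k * M')) = fun Mf => g T' (Mf / k) N' M' := by
      funext Mf
      rw [hg, hg]
      rw [show -Mf / (k * N') = -(Mf / k) / N' by field_simp, hlog2]
    rw [heq]
    have h1 : HasDerivAt (fun x : ℝ => x / k) (1 / k) (k * Mf') := by
      simpa using (hasDerivAt_id (k * Mf')).div_const k
    have h2 : HasDerivAt (fun Mf => g T' Mf N' M') 0 ((k * Mf') / k) := by
      rw [mul_div_cancel_left₀ Mf' hk0]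
      exact hstatM
    have := h2.comp (k * Mf') h1
    simpa [Function.comp_def] using this
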